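/- arXiv:2301.03069 — 4 statements merged into one kernel-verified Lean document; each statement's English description precedes it below -/
import Mathlib

section
/- For every k ≥ 0 and every z with Im z ≠ 0, (2π)^{-1/2} ∫_ℝ H_k(v) e^{-v^2/2}/(v - z) dv = (-1)^k Z^{(k)}(z), where H_k is the k-th probabilists' Hermite polynomial and Z is the plasma dispersion function. -/
/-!
`plasmaZ` is, up to the constant `(2π)^{-1/2}`, the Cauchy transform `w ↦ ∫ f v / (v - w)` of the
Gaussian `f v = exp (-v²/2)`. Off the real line the Cauchy transform of an integrable `f` can be
differentiated under the integral sign, and an integration by parts moves the derivative onto `f`: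
`(C f)' = C f'`. Hence `Z⁽ᵏ⁾` is the Cauchy transform of the `k`-th derivative of the Gaussian,
which is `(-1)ᵏ Hₖ(v) exp (-v²/2)`.
-/

open MeasureTheory Real Complex

noncomputable def plasmaZ (ζ : ℂ) : ℂ :=
  ((Real.sqrt (2 * π) : ℂ))⁻¹ * ∫ v : ℝ, Complex.exp (-(v:ℂ)^2 / 2) / ((v:ℂ) - ζ)

open Polynomial Filter Metric Topology
open scoped ContDiff

noncomputable def cauchyTransform (f : ℝ → ℂ) (w : ℂ) : ℂ :=
  ∫ v : ℝ, f v / ((v : ℂ) - w)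

lemma abs_im_le_norm_ofReal_sub (v : ℝ) (w : ℂ) : |w.im| ≤ ‖(v : ℂ) - w‖ := by
  simpa using Complex.abs_im_le_norm ((v : ℂ) - w)

lemma MeasureTheory.Integrable.div_ofReal_sub_pow {f : ℝ → ℂ} (hf : Integrable f) {z : ℂ}
    (hz : z.im ≠ 0) (m : ℕ) : Integrable fun v : ℝ => f v / ((v : ℂ) - z) ^ m := by
  have hpos : 0 < |z.im| := abs_pos.mpr hz
  simp_rw [div_eq_inv_mul]
  refine hf.bdd_mul (c := (|z.im| ^ m)⁻¹) (by fun_prop) (ae_of_all _ fun v => ?_)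
  rw [norm_inv, norm_pow]
  exact inv_anti₀ (pow_pos hpos m) (pow_le_pow_left₀ hpos.le (abs_im_le_norm_ofReal_sub v z) m)

theorem hasDerivAt_cauchyTransform {f : ℝ → ℂ} (hf : Integrable f) {z : ℂ} (hz : z.im ≠ 0) :
    HasDerivAt (cauchyTransform f) (∫ v : ℝ, f v / ((v : ℂ) - z) ^ 2) z := by
  set ε := |z.im| / 2 with hε_def
  have hε : 0 < ε := by positivity
  have hfar : ∀ w ∈ ball z ε, ∀ v : ℝ, ε ≤ ‖(v : ℂ) - w‖ := by
    intro w hw v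
    rw [mem_ball, dist_comm, Complex.dist_eq] at hw
    have h1 : |z.im - w.im| < ε := (Complex.abs_im_le_norm (z - w)).trans_lt hw
    have h2 := abs_sub_abs_le_abs_sub z.im w.im
    have h3 := abs_im_le_norm_ofReal_sub v w
    linarith
  have hne : ∀ w ∈ ball z ε, ∀ v : ℝ, (v : ℂ) - w ≠ 0 := fun w hw v =>
    norm_ne_zero_iff.mp (hε.trans_le (hfar w hw v)).ne'
  refine (hasDerivAt_integral_of_dominated_loc_of_deriv_le (ball_mem_nhds z hε)
    (F := fun w v => f v / ((v : ℂ) - w)) (F' := fun w v => f v / ((v : ℂ) - w) ^ 2)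
    (bound := fun v => (ε ^ 2)⁻¹ * ‖f v‖)
    (Eventually.of_forall fun w =>
      hf.1.div₀ (by fun_prop : Measurable fun v : ℝ => (v : ℂ) - w).aestronglyMeasurable)
    (by simpa using hf.div_ofReal_sub_pow hz 1) (hf.div_ofReal_sub_pow hz 2).1
    (ae_of_all _ fun v w hw => ?_) (hf.norm.const_mul _) (ae_of_all _ fun v w hw => ?_)).2
  · rw [norm_div, norm_pow, div_eq_inv_mul]
    gcongr
    exact hfar w hw v
  · simpa using
      (hasDerivAt_const w (f v)).fun_div ((hasDerivAt_id w).const_sub (v : ℂ)) (hne w hw v)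

theorem integral_div_ofReal_sub_sq {f f' : ℝ → ℂ} (hderiv : ∀ v, HasDerivAt f (f' v) v)
    (hf : Integrable f) (hf' : Integrable f') {z : ℂ} (hz : z.im ≠ 0) :
    ∫ v : ℝ, f v / ((v : ℂ) - z) ^ 2 = cauchyTransform f' z := by
  have hinv (v : ℝ) : HasDerivAt (fun x : ℝ => ((x : ℂ) - z)⁻¹) (-1 / ((v : ℂ) - z) ^ 2) v := by
    simpa using (((hasDerivAt_id (v : ℂ)).sub_const z).inv
      (sub_ne_zero_of_ne fun h => hz (by simp [← h]))).comp_ofReal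
  have hparts := integral_mul_deriv_eq_deriv_mul_of_integrable (fun v _ => hderiv v)
    (fun v _ => hinv v)
    (by simpa [Pi.mul_def, div_eq_mul_inv] using (hf.div_ofReal_sub_pow hz 2).neg)
    (by simpa [Pi.mul_def, div_eq_mul_inv] using hf'.div_ofReal_sub_pow hz 1)
    (by simpa [Pi.mul_def, div_eq_mul_inv] using hf.div_ofReal_sub_pow hz 1)
  simpa [cauchyTransform, div_eq_mul_inv, integral_neg] using hparts

theorem hasDerivAt_cauchyTransform_of_hasDerivAt {f f' : ℝ → ℂ}
    (hderiv : ∀ v, HasDerivAt f (f' v) v) (hf : Integrable f) (hf' : Integrable f') {z : ℂ}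
    (hz : z.im ≠ 0) : HasDerivAt (cauchyTransform f) (cauchyTransform f' z) z :=
  integral_div_ofReal_sub_sq hderiv hf hf' hz ▸ hasDerivAt_cauchyTransform hf hz

theorem iteratedDeriv_cauchyTransform {f : ℝ → ℂ} (hf : ContDiff ℝ ∞ f)
    (hint : ∀ n, Integrable (iteratedDeriv n f)) (k : ℕ) {z : ℂ} (hz : z.im ≠ 0) :
    iteratedDeriv k (cauchyTransform f) z = cauchyTransform (iteratedDeriv k f) z := by
  induction k generalizing z with
  | zero => simp
  | succ k ih =>
    have heq : iteratedDeriv k (cauchyTransform f) =ᶠ[𝓝 z] cauchyTransform (iteratedDeriv k f) :=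
      eventually_of_mem ((isOpen_ne_fun continuous_im continuous_const).mem_nhds hz)
        fun w hw => ih hw
    rw [iteratedDeriv_succ, heq.deriv_eq, iteratedDeriv_succ]
    have hdiff : Differentiable ℝ (iteratedDeriv k f) :=
      hf.differentiable_iteratedDeriv k (by exact_mod_cast WithTop.coe_lt_top _)
    exact (hasDerivAt_cauchyTransform_of_hasDerivAt (fun v => (hdiff v).hasDerivAt) (hint k)
      (by simpa only [iteratedDeriv_succ] using hint (k + 1)) hz).deriv

lemma integrable_ofReal_pow_mul_cexp_neg_sq_div_two (n : ℕ) :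
    Integrable fun v : ℝ => (v : ℂ) ^ n * cexp (-(v : ℂ) ^ 2 / 2) := by
  have h := (integrable_rpow_mul_exp_neg_mul_sq (b := 1 / 2) (by norm_num)
    (s := n) (by linarith [n.cast_nonneg (α := ℝ)])).ofReal (𝕜 := ℂ)
  refine h.congr (ae_of_all _ fun v => ?_)
  simp only [RCLike.ofReal_eq_complex_ofReal, Real.rpow_natCast]
  push_cast
  ring_nf

lemma integrable_aeval_mul_cexp_neg_sq_div_two {R : Type*} [CommSemiring R] [Algebra R ℂ]
    (p : R[X]) : Integrable fun v : ℝ => aeval (v : ℂ) p * cexp (-(v : ℂ) ^ 2 / 2) := by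
  induction p using Polynomial.induction_on' with
  | add p q hp hq => exact (hp.add hq).congr (ae_of_all _ fun v => by simp [add_mul])
  | monomial n a =>
    simpa [mul_assoc] using (integrable_ofReal_pow_mul_cexp_neg_sq_div_two n).const_mul
      (algebraMap R ℂ a)

lemma hasDerivAt_aeval_hermite_mul_cexp (n : ℕ) (v : ℝ) :
    HasDerivAt (fun x : ℝ => aeval (x : ℂ) (hermite n) * cexp (-(x : ℂ) ^ 2 / 2))
      (-(aeval (v : ℂ) (hermite (n + 1)) * cexp (-(v : ℂ) ^ 2 / 2))) v := by
  have hexp : HasDerivAt (fun x : ℂ => cexp (-x ^ 2 / 2)) (-v * cexp (-(v : ℂ) ^ 2 / 2)) v :=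
    ((hasDerivAt_pow 2 (v : ℂ)).fun_neg.div_const 2).cexp.congr_deriv (by ring)
  refine (((hermite n).hasDerivAt_aeval (v : ℂ)).mul hexp).comp_ofReal.congr_deriv ?_
  simp only [hermite_succ, map_sub, map_mul, aeval_X]
  ring

theorem iteratedDeriv_cexp_neg_sq_div_two (n : ℕ) :
    iteratedDeriv n (fun x : ℝ => cexp (-(x : ℂ) ^ 2 / 2)) =
      fun v : ℝ => (-1) ^ n * (aeval (v : ℂ) (hermite n) * cexp (-(v : ℂ) ^ 2 / 2)) := by
  induction n with
  | zero => simp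
  | succ n ih =>
    ext v
    rw [iteratedDeriv_succ, ih]
    exact ((hasDerivAt_aeval_hermite_mul_cexp n v).const_mul _).deriv.trans (by ring)

/-- Integrating the `k`-th probabilists' Hermite polynomial against the Cauchy–Gaussian
kernel gives the `k`-th derivative of the plasma dispersion function. -/
theorem hermite_cauchy_gaussian_eq_iteratedDeriv (k : ℕ) (z : ℂ) (hz : z.im ≠ 0) :
    ((Real.sqrt (2 * π) : ℂ))⁻¹ *
        ∫ v : ℝ, ((Polynomial.hermite k).aeval (v:ℂ)) * Complex.exp (-(v:ℂ)^2 / 2) / ((v:ℂ) - z)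
      = (-1)^k * iteratedDeriv k plasmaZ z := by
  have hsmooth : ContDiff ℝ ∞ fun x : ℝ => cexp (-(x : ℂ) ^ 2 / 2) :=
    Complex.contDiff_exp.comp (((contDiff_id.pow 2).neg.div_const 2).comp ofRealCLM.contDiff)
  have hintegrable (n : ℕ) : Integrable (iteratedDeriv n fun x : ℝ => cexp (-(x : ℂ) ^ 2 / 2)) := by
    rw [iteratedDeriv_cexp_neg_sq_div_two]
    exact (integrable_aeval_mul_cexp_neg_sq_div_two _).const_mul _
  have hZ : plasmaZ = fun w => ((Real.sqrt (2 * π) : ℂ))⁻¹ *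
      cauchyTransform (fun x : ℝ => cexp (-(x : ℂ) ^ 2 / 2)) w := rfl
  rw [hZ, iteratedDeriv_const_mul_field, iteratedDeriv_cauchyTransform hsmooth hintegrable k hz,
    iteratedDeriv_cexp_neg_sq_div_two, cauchyTransform]
  simp_rw [mul_div_assoc, integral_const_mul]
  have hsign : ((-1 : ℂ) ^ k) * (-1) ^ k = 1 := by rw [← mul_pow]; norm_num
  rw [mul_left_comm _ ((-1) ^ k), ← mul_assoc, hsign, one_mul]
end

section
/- For ζ in the upper half-plane, |Z(ζ)| ≤ √(π/2), where Z is the plasma dispersion function, with the supremum value √(π/2) attained only in the boundary limit ζ → 0. -/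
/-!
For `Im ζ > 0`, writing `1 / (v - ζ) = i ∫₀^∞ e^{-i (v - ζ) t} dt`, exchanging the integrals and
using that the Gaussian is its own Fourier transform gives `Z(ζ) = i ∫₀^∞ e^{i ζ t - t² / 2} dt`.
The integrand has modulus `e^{-(Im ζ) t - t² / 2} < e^{-t² / 2}` for `t > 0`, and the
half-Gaussian integral is `√(π / 2)`. The same domination makes the half-line integral
continuous on the closed upper half-plane, where at `ζ = 0` it is exactly `√(π / 2)`.
-/

open MeasureTheory Real Complex Filter

open Set Topology

theorem setIntegral_lt_setIntegral_of_forall_lt {α : Type*} [MeasurableSpace α] {μ : Measure α}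
    {f g : α → ℝ} {s : Set α} (hs : MeasurableSet s) (hμs : μ s ≠ 0)
    (hf : IntegrableOn f s μ) (hg : IntegrableOn g s μ) (hlt : ∀ x ∈ s, f x < g x) :
    ∫ x in s, f x ∂μ < ∫ x in s, g x ∂μ := by
  rw [← sub_pos, ← integral_sub hg hf]
  have hnonneg : 0 ≤ᵐ[μ.restrict s] g - f :=
    (ae_restrict_iff' hs).2 (ae_of_all _ fun x hx => sub_nonneg.2 (hlt x hx).le)
  have hsupp : s ⊆ Function.support (g - f) := fun x hx => (sub_pos.2 (hlt x hx)).ne'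
  refine (setIntegral_pos_iff_support_of_nonneg_ae hnonneg (hg.sub hf)).2 ?_
  rwa [inter_eq_right.2 hsupp, pos_iff_ne_zero]

theorem inv_eq_I_mul_integral_cexp {w : ℂ} (hw : w.im < 0) :
    w⁻¹ = I * ∫ t in Ioi (0 : ℝ), cexp (-I * w * t) := by
  have hre : (-I * w).re < 0 := by simpa using hw
  have hw0 : w ≠ 0 := by rintro rfl; simp at hw
  rw [integral_exp_mul_complex_Ioi hre]
  field_simp
  simp

theorem integral_cexp_neg_sq_div_two_mul_cexp (t : ℂ) :
    ∫ v : ℝ, cexp (-(v : ℂ) ^ 2 / 2) * cexp (-I * v * t) =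
      √(2 * π) * cexp (-t ^ 2 / 2) := by
  have h := fourierIntegral_gaussian (b := 1 / 2) (by norm_num) (-t)
  have hsqrt : ((π : ℂ) / (1 / 2)) ^ (1 / 2 : ℂ) = (√(2 * π) : ℝ) := by
    rw [Real.sqrt_eq_rpow, Complex.ofReal_cpow (by positivity)]
    push_cast
    ring_nf
  rw [hsqrt] at h
  convert h using 3 with v
  · rw [mul_comm]; ring_nf
  · ring_nf

theorem integrable_exp_neg_sq_div_two : Integrable fun t : ℝ => rexp (-t ^ 2 / 2) := by
  simpa [neg_div, div_eq_inv_mul] using integrable_exp_neg_mul_sq (b := 1 / 2) (by norm_num)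

theorem integral_exp_neg_sq_div_two_Ioi :
    ∫ t in Ioi (0 : ℝ), rexp (-t ^ 2 / 2) = √(π / 2) := by
  have h := integral_gaussian_Ioi (1 / 2)
  rw [show π / (1 / 2) = 2 ^ 2 * (π / 2) by ring, Real.sqrt_mul (by positivity),
    Real.sqrt_sq zero_le_two] at h
  simpa [neg_div, div_eq_inv_mul] using h

theorem norm_cexp_I_mul_mul_sub (ζ : ℂ) (t : ℝ) :
    ‖cexp (I * ζ * t - (t : ℂ) ^ 2 / 2)‖ = rexp (-ζ.im * t - t ^ 2 / 2) := by
  simp [Complex.norm_exp, ← Complex.ofReal_pow]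

theorem integrable_gaussian_mul_cexp_neg_I_mul_sub {ζ : ℂ} (hζ : 0 < ζ.im) :
    Integrable
      (Function.uncurry fun (v t : ℝ) => cexp (-(v : ℂ) ^ 2 / 2) * cexp (-I * (v - ζ) * t))
      (volume.prod (volume.restrict (Ioi 0))) := by
  refine (integrable_exp_neg_sq_div_two.mul_prod (exp_neg_integrableOn_Ioi 0 hζ)).mono'
    (by fun_prop) (ae_of_all _ fun p => le_of_eq ?_)
  simp [Function.uncurry, Complex.norm_exp, ← Complex.ofReal_pow]

theorem plasmaZ_eq_I_mul_integral {ζ : ℂ} (hζ : 0 < ζ.im) :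
    plasmaZ ζ = I * ∫ t in Ioi (0 : ℝ), cexp (I * ζ * t - (t : ℂ) ^ 2 / 2) := by
  have hinv (v : ℝ) : cexp (-(v : ℂ) ^ 2 / 2) / (v - ζ) =
      I * ∫ t in Ioi (0 : ℝ), cexp (-(v : ℂ) ^ 2 / 2) * cexp (-I * (v - ζ) * t) := by
    rw [div_eq_mul_inv, inv_eq_I_mul_integral_cexp (by simpa using hζ), integral_const_mul]
    ring
  have hinner (t : ℝ) :
      ∫ v : ℝ, cexp (-(v : ℂ) ^ 2 / 2) * cexp (-I * (v - ζ) * t) =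
        √(2 * π) * cexp (I * ζ * t - (t : ℂ) ^ 2 / 2) := by
    have hsplit (v : ℝ) : cexp (-(v : ℂ) ^ 2 / 2) * cexp (-I * (v - ζ) * t) =
        cexp (I * ζ * t) * (cexp (-(v : ℂ) ^ 2 / 2) * cexp (-I * v * t)) := by
      simp only [← Complex.exp_add]
      ring_nf
    simp_rw [hsplit, integral_const_mul, integral_cexp_neg_sq_div_two_mul_cexp, sub_eq_add_neg,
      Complex.exp_add]
    ring_nf
  have hs : (√(2 * π) : ℂ) ≠ 0 := by exact_mod_cast (Real.sqrt_pos.2 (by positivity)).ne'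
  rw [plasmaZ]
  simp_rw [hinv]
  rw [integral_const_mul, integral_integral_swap (integrable_gaussian_mul_cexp_neg_I_mul_sub hζ)]
  simp_rw [hinner]
  rw [integral_const_mul]
  field_simp

theorem exp_neg_mul_sub_sq_div_two_le {y t : ℝ} (hy : 0 ≤ y) (ht : 0 ≤ t) :
    rexp (-y * t - t ^ 2 / 2) ≤ rexp (-t ^ 2 / 2) :=
  Real.exp_le_exp.2 (by nlinarith [mul_nonneg hy ht])

theorem exp_neg_mul_sub_sq_div_two_lt {y t : ℝ} (hy : 0 < y) (ht : 0 < t) :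
    rexp (-y * t - t ^ 2 / 2) < rexp (-t ^ 2 / 2) :=
  Real.exp_lt_exp.2 (by nlinarith [mul_pos hy ht])

theorem integrableOn_exp_neg_mul_sub_sq_div_two_Ioi {y : ℝ} (hy : 0 ≤ y) :
    IntegrableOn (fun t : ℝ => rexp (-y * t - t ^ 2 / 2)) (Ioi 0) := by
  refine integrable_exp_neg_sq_div_two.integrableOn.mono' (by fun_prop) ?_
  refine (ae_restrict_iff' measurableSet_Ioi).2 (ae_of_all _ fun t ht => ?_)
  rw [Real.norm_of_nonneg (Real.exp_pos _).le]
  exact exp_neg_mul_sub_sq_div_two_le hy (le_of_lt ht)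

theorem norm_plasmaZ_lt {ζ : ℂ} (hζ : 0 < ζ.im) : ‖plasmaZ ζ‖ < √(π / 2) :=
  calc ‖plasmaZ ζ‖ = ‖∫ t in Ioi (0 : ℝ), cexp (I * ζ * t - (t : ℂ) ^ 2 / 2)‖ := by
        rw [plasmaZ_eq_I_mul_integral hζ, norm_mul, norm_I, one_mul]
    _ ≤ ∫ t in Ioi (0 : ℝ), rexp (-ζ.im * t - t ^ 2 / 2) :=
        norm_integral_le_of_norm_le (integrableOn_exp_neg_mul_sub_sq_div_two_Ioi hζ.le)
          (ae_of_all _ fun t => (norm_cexp_I_mul_mul_sub ζ t).le)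
    _ < ∫ t in Ioi (0 : ℝ), rexp (-t ^ 2 / 2) :=
        setIntegral_lt_setIntegral_of_forall_lt measurableSet_Ioi (by simp)
          (integrableOn_exp_neg_mul_sub_sq_div_two_Ioi hζ.le)
          integrable_exp_neg_sq_div_two.integrableOn
          fun _ ht => exp_neg_mul_sub_sq_div_two_lt hζ ht
    _ = √(π / 2) := integral_exp_neg_sq_div_two_Ioi

theorem continuousOn_integral_cexp_I_mul_mul_sub :
    ContinuousOn (fun ζ : ℂ => ∫ t in Ioi (0 : ℝ), cexp (I * ζ * t - (t : ℂ) ^ 2 / 2))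
      {ζ | 0 ≤ ζ.im} := by
  refine continuousOn_of_dominated (fun _ _ => by fun_prop) (fun ζ hζ => ?_)
    integrable_exp_neg_sq_div_two.integrableOn (ae_of_all _ fun _ => by fun_prop)
  refine (ae_restrict_iff' measurableSet_Ioi).2 (ae_of_all _ fun t ht => ?_)
  rw [norm_cexp_I_mul_mul_sub]
  exact exp_neg_mul_sub_sq_div_two_le hζ (le_of_lt ht)

theorem tendsto_norm_plasmaZ :
    Tendsto (fun ζ => ‖plasmaZ ζ‖) (𝓝[{ζ : ℂ | 0 < ζ.im}] 0) (𝓝 √(π / 2)) := by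
  have hzero :
      ∫ t in Ioi (0 : ℝ), cexp (I * (0 : ℂ) * t - (t : ℂ) ^ 2 / 2) = (√(π / 2) : ℂ) := by
    rw [← integral_exp_neg_sq_div_two_Ioi, ← integral_complex_ofReal]
    push_cast
    simp [neg_div]
  have hlim := (continuousOn_integral_cexp_I_mul_mul_sub 0 (by simp)).tendsto.norm.mono_left
    (nhdsWithin_mono 0 (s := {ζ : ℂ | 0 < ζ.im}) fun _ hζ => le_of_lt (α := ℝ) hζ)
  rw [hzero, Complex.norm_real, Real.norm_of_nonneg (Real.sqrt_nonneg _)] at hlim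
  refine hlim.congr' (eventually_nhdsWithin_of_forall fun ζ hζ => ?_)
  show _ = ‖plasmaZ ζ‖
  rw [plasmaZ_eq_I_mul_integral hζ, norm_mul, norm_I, one_mul]

/-- On the open upper half-plane `|Z| ≤ √(π/2)`, the bound being strict there; the value
`√(π/2)` is attained only in the boundary limit `ζ → 0`. -/
theorem plasmaZ_bound :
    (∀ ζ : ℂ, 0 < ζ.im → ‖plasmaZ ζ‖ ≤ Real.sqrt (π / 2)) ∧
    (∀ ζ : ℂ, 0 < ζ.im → ‖plasmaZ ζ‖ < Real.sqrt (π / 2)) ∧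
    Tendsto (fun ζ => ‖plasmaZ ζ‖) (nhdsWithin 0 {ζ : ℂ | 0 < ζ.im})
      (nhds (Real.sqrt (π / 2))) :=
  ⟨fun _ hζ => (norm_plasmaZ_lt hζ).le, fun _ hζ => norm_plasmaZ_lt hζ,
    tendsto_norm_plasmaZ⟩
end

section
/- In the cone |arg ζ| ≤ π/2 - δ (0 < δ ≤ π/2) in the upper half-plane, Γ_{τk}(ζ) → i(kτ)^3 as ζ → ∞; i.e. all polynomially growing terms of the spectral function cancel against the asymptotic expansion of Z, leaving the constant i(kτ)^3 plus O(|ζ|^{-1}). -/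
open MeasureTheory Real Complex Filter Asymptotics

/-- The spectral function of the linearized BGK operator. -/
noncomputable def specGamma (τ k : ℝ) (ζ : ℂ) : ℂ :=
  (1/6) * (ζ + 6 * Complex.I * ((k*τ:ℝ):ℂ)^3 - ζ * (ζ^2 + 5) * ((k*τ:ℝ):ℂ)^2
    + 2 * Complex.I * (ζ^2 + 3) * ((k*τ:ℝ):ℂ)
    + plasmaZ ζ * (ζ^2 - (ζ^4 + 4*ζ^2 + 11) * ((k*τ:ℝ):ℂ)^2
        + 2 * Complex.I * ζ^3 * ((k*τ:ℝ):ℂ) - 5)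
    - 4 * Complex.I * (plasmaZ ζ)^2 * ((ζ^2 + 1) * ((k*τ:ℝ):ℂ) - Complex.I * ζ))

/-- The filter of `ζ → ∞` within the cone `|arg ζ| ≤ π/2 - δ` in the upper half-plane. -/
noncomputable def coneAtInfty (δ : ℝ) : Filter ℂ :=
  Filter.comap (fun z : ℂ => ‖z‖) Filter.atTop ⊓
    Filter.principal {ζ : ℂ | |Complex.arg ζ| ≤ π / 2 - δ ∧ 0 < ζ.im}

/-!
With `u = ζ⁻¹`, expanding `1 / (v - ζ)` as a geometric sum with remainder and using the Gaussian
moments gives `Z(ζ) = -u - u³ + W(ζ) u⁵` (`plasmaZRemainder`), where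
`W(ζ) = (2π)^{-1/2} ζ ∫ v⁴ e^{-v²/2} / (v - ζ) dv`.
Substituted into `Γ_{τk}`, this cancels every nonnegative power of `ζ`:
`Γ_{τk}(ζ) - i(kτ)³ = u · Q(u, W(ζ))` with an explicit polynomial `Q` (`specGammaTail`). So it is
enough that `W` stays bounded in the cone. The cone keeps `ζ` off the imaginary axis but not off the
real one, so the Cauchy integral is estimated by hand: away from `Re ζ` the denominator is large,
and near `Re ζ` one subtracts the density's value at `Re ζ` (controlled by its derivative) and
integrates `1 / (v - ζ)` exactly, by a logarithm whose real parts cancel.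
-/

open Set

lemma abs_pow_mul_exp_neg_sq_div_two_le (n : ℕ) (t : ℝ) :
    |t| ^ n * rexp (-t ^ 2 / 2) ≤ 1 + 2 ^ n * n.factorial := by
  have hpow : |t| ^ n ≤ 1 + (t ^ 2) ^ n := by
    rcases le_total |t| 1 with h | h
    · linarith [pow_le_one₀ (n := n) (abs_nonneg t) h, pow_nonneg (sq_nonneg t) n]
    · rw [← sq_abs, ← pow_mul]
      linarith [pow_le_pow_right₀ h (by omega : n ≤ 2 * n)]
  have hmom : (t ^ 2) ^ n ≤ 2 ^ n * n.factorial * rexp (t ^ 2 / 2) := by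
    have := Real.pow_div_factorial_le_exp (t ^ 2 / 2) (by positivity) n
    rw [div_pow, div_div, div_le_iff₀ (by positivity)] at this
    linarith
  have hinv : rexp (t ^ 2 / 2) * rexp (-t ^ 2 / 2) = 1 := by
    rw [← Real.exp_add, neg_div, add_neg_cancel, Real.exp_zero]
  have hle : rexp (-t ^ 2 / 2) ≤ 1 := Real.exp_le_one_iff.mpr (by nlinarith [sq_nonneg t])
  calc |t| ^ n * rexp (-t ^ 2 / 2)
      ≤ (1 + 2 ^ n * n.factorial * rexp (t ^ 2 / 2)) * rexp (-t ^ 2 / 2) := by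
        gcongr; linarith
    _ ≤ 1 + 2 ^ n * n.factorial := by
        rw [add_mul, one_mul, mul_assoc, hinv, mul_one]
        linarith

lemma integrable_pow_mul_exp_neg_sq_div_two (n : ℕ) :
    Integrable fun v : ℝ => v ^ n * rexp (-v ^ 2 / 2) := by
  have := integrable_rpow_mul_exp_neg_mul_sq (b := 1 / 2) (by norm_num) (s := n)
    (by linarith [n.cast_nonneg (α := ℝ)])
  convert this using 2 with v
  rw [Real.rpow_natCast]; ring_nf

lemma integral_exp_neg_sq_div_two : ∫ v : ℝ, rexp (-v ^ 2 / 2) = √(2 * π) := by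
  convert integral_gaussian (1 / 2) using 3 <;> ring_nf

lemma integral_pow_mul_exp_neg_sq_div_two_of_odd {n : ℕ} (hn : Odd n) :
    ∫ v : ℝ, v ^ n * rexp (-v ^ 2 / 2) = 0 := by
  have h := integral_neg_eq_self (fun v : ℝ => v ^ n * rexp (-v ^ 2 / 2)) volume
  simp only [hn.neg_pow, neg_sq, neg_mul, integral_neg] at h
  linarith

lemma integral_sq_mul_exp_neg_sq_div_two :
    ∫ v : ℝ, v ^ 2 * rexp (-v ^ 2 / 2) = √(2 * π) := by
  have hvar : ∫ v, v ^ 2 ∂(ProbabilityTheory.gaussianReal 0 1) = 1 := by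
    have := ProbabilityTheory.variance_id_gaussianReal (μ := 0) (v := 1)
    rw [ProbabilityTheory.variance_eq_integral measurable_id.aemeasurable] at this
    simpa using this
  rw [ProbabilityTheory.integral_gaussianReal_eq_integral_smul one_ne_zero] at hvar
  simp only [ProbabilityTheory.gaussianPDFReal, smul_eq_mul, NNReal.coe_one, mul_one,
    sub_zero, mul_assoc, integral_const_mul] at hvar
  rw [inv_mul_eq_iff_eq_mul₀ (by positivity), mul_one] at hvar
  simpa only [mul_comm] using hvar

lemma hasDerivAt_pow_mul_exp_neg_sq_div_two (n : ℕ) (t : ℝ) :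
    HasDerivAt (fun t : ℝ => t ^ (n + 1) * rexp (-t ^ 2 / 2))
      ((n + 1) * t ^ n * rexp (-t ^ 2 / 2) - t ^ (n + 2) * rexp (-t ^ 2 / 2)) t := by
  have hexp : HasDerivAt (fun t : ℝ => rexp (-t ^ 2 / 2)) (rexp (-t ^ 2 / 2) * (-t)) t := by
    have : HasDerivAt (fun t : ℝ => -t ^ 2 / 2) (-t) t :=
      ((hasDerivAt_pow 2 t).fun_neg.div_const 2).congr_deriv (by norm_num; ring)
    exact this.exp
  refine ((hasDerivAt_pow (n + 1) t).fun_mul hexp).congr_deriv ?_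
  rw [Nat.add_sub_cancel]
  push_cast
  ring

lemma im_le_norm_ofReal_sub {ζ : ℂ} (hζ : 0 < ζ.im) (v : ℝ) : ζ.im ≤ ‖(v : ℂ) - ζ‖ := by
  simpa [abs_of_pos hζ] using abs_im_le_norm ((v : ℂ) - ζ)

lemma ofReal_sub_ne_zero {ζ : ℂ} (hζ : 0 < ζ.im) (v : ℝ) : (v : ℂ) - ζ ≠ 0 :=
  norm_pos_iff.mp (hζ.trans_le (im_le_norm_ofReal_sub hζ v))

lemma abs_sub_re_le_norm_ofReal_sub (ζ : ℂ) (v : ℝ) : |v - ζ.re| ≤ ‖(v : ℂ) - ζ‖ := by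
  simpa using abs_re_le_norm ((v : ℂ) - ζ)

lemma integrable_ofReal_div_sub {f : ℝ → ℝ} (hf : Integrable f) {ζ : ℂ} (hζ : 0 < ζ.im) :
    Integrable fun v : ℝ => (f v : ℂ) / (v - ζ) := by
  refine (hf.norm.div_const ζ.im).mono' ?_ (Eventually.of_forall fun v => ?_)
  · exact hf.ofReal.aestronglyMeasurable.div₀
      (by fun_prop : Continuous fun v : ℝ => (v : ℂ) - ζ).aestronglyMeasurable
  · rw [norm_div, Complex.norm_real]
    exact div_le_div_of_nonneg_left (norm_nonneg _) hζ (im_le_norm_ofReal_sub hζ v)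

lemma inv_sub_eq_neg_sum_add {v ζ : ℂ} (hv : v - ζ ≠ 0) (hζ : ζ ≠ 0) (n : ℕ) :
    (v - ζ)⁻¹ = -∑ j ∈ Finset.range n, v ^ j / ζ ^ (j + 1) + v ^ n / (v - ζ) / ζ ^ n := by
  induction n with
  | zero => simp
  | succ n ih =>
    rw [ih, Finset.sum_range_succ]
    field_simp
    ring

lemma integral_ofReal_div_sub_eq {ρ : ℝ → ℝ} (n : ℕ)
    (hρ : ∀ j ≤ n, Integrable fun v => v ^ j * ρ v) {ζ : ℂ} (hζ : 0 < ζ.im) :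
    ∫ v : ℝ, (ρ v : ℂ) / (v - ζ) =
      -∑ j ∈ Finset.range n, ((∫ v, v ^ j * ρ v : ℝ) : ℂ) / ζ ^ (j + 1)
        + (∫ v : ℝ, ((v ^ n * ρ v : ℝ) : ℂ) / (v - ζ)) / ζ ^ n := by
  have hζ0 : ζ ≠ 0 := fun h => by simp [h] at hζ
  have hpt : ∀ v : ℝ, (ρ v : ℂ) / (v - ζ) =
      -∑ j ∈ Finset.range n, ((v ^ j * ρ v : ℝ) : ℂ) / ζ ^ (j + 1)
        + ((v ^ n * ρ v : ℝ) : ℂ) / (v - ζ) / ζ ^ n := by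
    intro v
    rw [div_eq_mul_inv, inv_sub_eq_neg_sum_add (ofReal_sub_ne_zero hζ v) hζ0 n]
    push_cast
    simp only [Finset.mul_sum, mul_add, mul_neg]
    congr 1
    · congr 1; refine Finset.sum_congr rfl fun j _ => by ring
    · ring
  have hmom : ∀ j ∈ Finset.range n, Integrable fun v : ℝ => ((v ^ j * ρ v : ℝ) : ℂ) / ζ ^ (j + 1) :=
    fun j hj => ((hρ j (Finset.mem_range.mp hj).le).ofReal).div_const _
  have hsum :
      Integrable fun v : ℝ => -∑ j ∈ Finset.range n, ((v ^ j * ρ v : ℝ) : ℂ) / ζ ^ (j + 1) :=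
    (integrable_finsetSum _ hmom).neg
  simp_rw [hpt]
  rw [integral_add hsum ((integrable_ofReal_div_sub (hρ n le_rfl) hζ).div_const _),
    integral_neg, integral_finsetSum _ hmom]
  simp only [MeasureTheory.integral_div, integral_complex_ofReal]

lemma norm_intervalIntegral_inv_ofReal_sub_le {ζ : ℂ} (hζ : 0 < ζ.im) (r : ℝ) :
    ‖∫ v in ζ.re - r..ζ.re + r, ((v : ℂ) - ζ)⁻¹‖ ≤ π := by
  have hderiv : ∀ t ∈ uIcc (ζ.re - r) (ζ.re + r),
      HasDerivAt (fun t : ℝ => log ((t : ℂ) - ζ)) ((t : ℂ) - ζ)⁻¹ t := by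
    intro t _
    have hslit : (t : ℂ) - ζ ∈ slitPlane := Or.inr (by simp [hζ.ne'])
    simpa using ((hasDerivAt_log hslit).comp (t : ℂ) ((hasDerivAt_id _).sub_const ζ)).comp_ofReal
  have hcont : Continuous fun v : ℝ => ((v : ℂ) - ζ)⁻¹ :=
    (by fun_prop : Continuous fun v : ℝ => (v : ℂ) - ζ).inv₀ (ofReal_sub_ne_zero hζ)
  rw [intervalIntegral.integral_eq_sub_of_hasDerivAt hderiv (hcont.intervalIntegrable _ _)]
  set a : ℂ := ((ζ.re + r : ℝ) : ℂ) - ζ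
  set b : ℂ := ((ζ.re - r : ℝ) : ℂ) - ζ
  -- the two endpoints are mirror images across the imaginary axis
  have hab : b = -(starRingEnd ℂ a) := by apply Complex.ext <;> simp [a, b]
  have ha : a.im < 0 := by simp [a, hζ]
  have hb : b.im < 0 := by simp [b, hζ]
  have hre : (log a - log b).re = 0 := by simp [log_re, hab]
  have him : |(log a - log b).im| ≤ π := by
    rw [sub_im, log_im, log_im, abs_le]
    constructor <;>
      linarith [arg_neg_iff.mpr ha, arg_neg_iff.mpr hb, neg_pi_lt_arg a, neg_pi_lt_arg b]
  calc ‖log a - log b‖ ≤ |(log a - log b).re| + |(log a - log b).im| :=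
        norm_le_abs_re_add_abs_im _
    _ ≤ π := by rw [hre, abs_zero, zero_add]; exact him

lemma norm_integral_ofReal_div_sub_le {g : ℝ → ℝ} (hg : Integrable g) {ζ : ℂ} (hζ : 0 < ζ.im)
    {r M : ℝ} (hr : 0 < r)
    (hM : ∀ v ∈ Icc (ζ.re - r) (ζ.re + r), |g v - g ζ.re| ≤ M * |v - ζ.re|) :
    ‖∫ v : ℝ, (g v : ℂ) / (v - ζ)‖ ≤ (∫ v, |g v|) / r + 2 * r * M + π * |g ζ.re| := by
  set x := ζ.re
  set B := Ioc (x - r) (x + r)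
  have hInt := integrable_ofReal_div_sub hg hζ
  have hM0 : 0 ≤ M := by
    have := (abs_nonneg _).trans (hM (x + r) ⟨by linarith, le_rfl⟩)
    rw [add_sub_cancel_left, abs_of_pos hr] at this
    exact nonneg_of_mul_nonneg_left this hr
  have hinv : IntegrableOn (fun v : ℝ => ((v : ℂ) - ζ)⁻¹) B :=
    (((by fun_prop : Continuous fun v : ℝ => (v : ℂ) - ζ).inv₀
      (ofReal_sub_ne_zero hζ)).integrableOn_Icc).mono_set Ioc_subset_Icc_self
  have hfar : ‖∫ v in Bᶜ, (g v : ℂ) / (v - ζ)‖ ≤ (∫ v, |g v|) / r := by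
    refine (norm_integral_le_of_norm_le (hg.norm.div_const r).integrableOn ?_).trans ?_
    · refine (ae_restrict_iff' measurableSet_Ioc.compl).mpr (Eventually.of_forall fun v hv => ?_)
      have hvx : r ≤ |v - x| := by
        simp only [mem_compl_iff, mem_Ioc, not_and_or, not_lt, not_le] at hv
        rcases hv with hv | hv
        · rw [abs_sub_comm, abs_of_nonneg (by linarith)]; linarith
        · rw [abs_of_nonneg (by linarith)]; linarith
      rw [norm_div, Complex.norm_real]
      exact div_le_div_of_nonneg_left (norm_nonneg _) hr
        (hvx.trans (abs_sub_re_le_norm_ofReal_sub ζ v))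
    · rw [integral_div]
      gcongr
      exact setIntegral_le_integral hg.norm (Eventually.of_forall fun v => norm_nonneg _)
  have hnear : ‖∫ v in B, ((g v - g x : ℝ) : ℂ) / (v - ζ)‖ ≤ 2 * r * M := by
    have := norm_setIntegral_le_of_norm_le_const (C := M) (μ := volume) (s := B)
      (f := fun v : ℝ => ((g v - g x : ℝ) : ℂ) / (v - ζ)) measure_Ioc_lt_top fun v hv => by
      rw [norm_div, Complex.norm_real, Real.norm_eq_abs, div_le_iff₀ (norm_pos_iff.mpr
        (ofReal_sub_ne_zero hζ v))]
      exact (hM v (Ioc_subset_Icc_self hv)).trans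
        (mul_le_mul_of_nonneg_left (abs_sub_re_le_norm_ofReal_sub ζ v) hM0)
    rwa [Real.volume_real_Ioc_of_le (by linarith), show x + r - (x - r) = 2 * r by ring,
      mul_comm M] at this
  have hlog : ‖∫ v in B, ((v : ℂ) - ζ)⁻¹‖ ≤ π := by
    rw [← intervalIntegral.integral_of_le (by linarith)]
    exact norm_intervalIntegral_inv_ofReal_sub_le hζ r
  have hsplit : ∫ v in B, (g v : ℂ) / (v - ζ) =
      (∫ v in B, ((g v - g x : ℝ) : ℂ) / (v - ζ)) + g x * ∫ v in B, ((v : ℂ) - ζ)⁻¹ := by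
    have hdiff : IntegrableOn (fun v : ℝ => ((g v - g x : ℝ) : ℂ) / (v - ζ)) B :=
      (hInt.integrableOn.sub (hinv.const_mul (g x : ℂ))).congr
        (Eventually.of_forall fun v => by simp only [Pi.sub_apply]; push_cast; ring)
    rw [← integral_const_mul, ← integral_add hdiff (hinv.const_mul _)]
    congr 1; ext v; push_cast; ring
  calc ‖∫ v : ℝ, (g v : ℂ) / (v - ζ)‖
      = ‖(∫ v in B, ((g v - g x : ℝ) : ℂ) / (v - ζ)) + (g x * ∫ v in B, ((v : ℂ) - ζ)⁻¹)
          + ∫ v in Bᶜ, (g v : ℂ) / (v - ζ)‖ := by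
        rw [← hsplit, integral_add_compl measurableSet_Ioc hInt]
    _ ≤ ‖∫ v in B, ((g v - g x : ℝ) : ℂ) / (v - ζ)‖ + ‖(g x : ℂ) * ∫ v in B, ((v : ℂ) - ζ)⁻¹‖
        + ‖∫ v in Bᶜ, (g v : ℂ) / (v - ζ)‖ := norm_add₃_le
    _ ≤ 2 * r * M + |g x| * π + (∫ v, |g v|) / r := by
        rw [norm_mul, Complex.norm_real, Real.norm_eq_abs]; gcongr
    _ = (∫ v, |g v|) / r + 2 * r * M + π * |g x| := by ring

lemma exists_norm_integral_pow_four_mul_exp_div_sub_le :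
    ∃ C, ∀ ζ : ℂ, 0 < ζ.im → 0 < ζ.re →
      ‖∫ v : ℝ, ((v ^ 4 * rexp (-v ^ 2 / 2) : ℝ) : ℂ) / (v - ζ)‖ ≤ C / ζ.re := by
  set c₅ : ℝ := 1 + 2 ^ 5 * (Nat.factorial 5 : ℝ)
  set c₇ : ℝ := 1 + 2 ^ 7 * (Nat.factorial 7 : ℝ)
  set K := ∫ v : ℝ, |v ^ 4 * rexp (-v ^ 2 / 2)|
  refine ⟨2 * K + (16 * c₅ + 4 * c₇) + π * c₅, fun ζ hζ hx => ?_⟩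
  set x := ζ.re
  have hderiv : ∀ t ∈ Icc (x / 2) (3 * x / 2),
      |4 * t ^ 3 * rexp (-t ^ 2 / 2) - t ^ 5 * rexp (-t ^ 2 / 2)| ≤ (16 * c₅ + 4 * c₇) / x ^ 2 := by
    intro t ht
    have ht0 : 0 < t := by linarith [ht.1]
    have hxt : x ^ 2 ≤ 4 * t ^ 2 := by nlinarith [ht.1]
    have h5 := abs_pow_mul_exp_neg_sq_div_two_le 5 t
    have h7 := abs_pow_mul_exp_neg_sq_div_two_le 7 t
    rw [abs_of_pos ht0] at h5 h7
    rw [le_div_iff₀ (by positivity)]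
    calc |4 * t ^ 3 * rexp (-t ^ 2 / 2) - t ^ 5 * rexp (-t ^ 2 / 2)| * x ^ 2
        ≤ (4 * t ^ 3 * rexp (-t ^ 2 / 2) + t ^ 5 * rexp (-t ^ 2 / 2)) * (4 * t ^ 2) := by
          gcongr
          exact (abs_sub _ _).trans (by rw [abs_of_pos (by positivity), abs_of_pos (by positivity)])
      _ = 16 * (t ^ 5 * rexp (-t ^ 2 / 2)) + 4 * (t ^ 7 * rexp (-t ^ 2 / 2)) := by ring
      _ ≤ 16 * c₅ + 4 * c₇ := by gcongr
  have hlip : ∀ v ∈ Icc (x - x / 2) (x + x / 2),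
      |v ^ 4 * rexp (-v ^ 2 / 2) - x ^ 4 * rexp (-x ^ 2 / 2)| ≤
        (16 * c₅ + 4 * c₇) / x ^ 2 * |v - x| := by
    intro v hv
    have hI : Icc (x - x / 2) (x + x / 2) = Icc (x / 2) (3 * x / 2) := by congr 1 <;> ring
    rw [hI] at hv
    refine (convex_Icc _ _).norm_image_sub_le_of_norm_hasDerivWithin_le
      (fun t _ => (hasDerivAt_pow_mul_exp_neg_sq_div_two 3 t).hasDerivWithinAt) ?_
      ⟨by linarith, by linarith⟩ hv
    intro t ht
    convert hderiv t ht using 3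
    norm_num
  have hval : |x ^ 4 * rexp (-x ^ 2 / 2)| ≤ c₅ / x := by
    rw [le_div_iff₀ hx, abs_of_nonneg (by positivity)]
    calc x ^ 4 * rexp (-x ^ 2 / 2) * x = |x| ^ 5 * rexp (-x ^ 2 / 2) := by
          rw [abs_of_pos hx]; ring
      _ ≤ c₅ := abs_pow_mul_exp_neg_sq_div_two_le 5 x
  refine (norm_integral_ofReal_div_sub_le (integrable_pow_mul_exp_neg_sq_div_two 4) hζ
    (half_pos hx) hlip).trans ?_
  calc K / (x / 2) + 2 * (x / 2) * ((16 * c₅ + 4 * c₇) / x ^ 2) + π * |x ^ 4 * rexp (-x ^ 2 / 2)|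
      ≤ K / (x / 2) + 2 * (x / 2) * ((16 * c₅ + 4 * c₇) / x ^ 2) + π * (c₅ / x) := by gcongr
    _ = (2 * K + (16 * c₅ + 4 * c₇) + π * c₅) / x := by field_simp

noncomputable def plasmaZRemainder (ζ : ℂ) : ℂ := ζ ^ 5 * (plasmaZ ζ + ζ⁻¹ + ζ⁻¹ ^ 3)

lemma plasmaZ_eq {ζ : ℂ} (hζ : 0 < ζ.im) :
    plasmaZ ζ = -ζ⁻¹ - ζ⁻¹ ^ 3 +
      (√(2 * π) : ℂ)⁻¹ * (∫ v : ℝ, ((v ^ 4 * rexp (-v ^ 2 / 2) : ℝ) : ℂ) / (v - ζ)) / ζ ^ 4 := by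
  have hζ0 : ζ ≠ 0 := fun h => by simp [h] at hζ
  have hexp : ∀ v : ℝ, cexp (-(v : ℂ) ^ 2 / 2) = ((rexp (-v ^ 2 / 2) : ℝ) : ℂ) := fun v => by
    push_cast; rfl
  have hsqrt : (√(2 * π) : ℂ) ≠ 0 := ofReal_ne_zero.mpr (by positivity)
  simp only [plasmaZ, hexp]
  rw [integral_ofReal_div_sub_eq 4 (fun j _ => integrable_pow_mul_exp_neg_sq_div_two j) hζ]
  simp only [Finset.sum_range_succ, Finset.sum_range_zero, pow_zero, one_mul,
    integral_exp_neg_sq_div_two, integral_sq_mul_exp_neg_sq_div_two,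
    integral_pow_mul_exp_neg_sq_div_two_of_odd odd_one,
    integral_pow_mul_exp_neg_sq_div_two_of_odd (by decide : Odd 3), ofReal_zero, zero_div]
  field_simp
  ring

lemma exists_norm_plasmaZRemainder_mul_re_le :
    ∃ C, ∀ ζ : ℂ, 0 < ζ.im → 0 < ζ.re → ‖plasmaZRemainder ζ‖ * ζ.re ≤ C * ‖ζ‖ := by
  obtain ⟨C, hC⟩ := exists_norm_integral_pow_four_mul_exp_div_sub_le
  refine ⟨(√(2 * π))⁻¹ * C, fun ζ hζ hx => ?_⟩
  have hζ0 : ζ ≠ 0 := fun h => by simp [h] at hζ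
  have hW : plasmaZRemainder ζ =
      (√(2 * π) : ℂ)⁻¹ * ζ * ∫ v : ℝ, ((v ^ 4 * rexp (-v ^ 2 / 2) : ℝ) : ℂ) / (v - ζ) := by
    rw [plasmaZRemainder, plasmaZ_eq hζ]
    field_simp
    ring
  set R := ∫ v : ℝ, ((v ^ 4 * rexp (-v ^ 2 / 2) : ℝ) : ℂ) / (v - ζ)
  have hR : ‖R‖ * ζ.re ≤ C := (le_div_iff₀ hx).mp (hC ζ hζ hx)
  rw [hW, norm_mul, norm_mul, norm_inv, Complex.norm_real, Real.norm_of_nonneg (by positivity)]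
  calc _ = (√(2 * π))⁻¹ * ‖ζ‖ * (‖R‖ * ζ.re) := by ring
    _ ≤ (√(2 * π))⁻¹ * ‖ζ‖ * C := by gcongr
    _ = (√(2 * π))⁻¹ * C * ‖ζ‖ := by ring

noncomputable def specGammaTail (α u W : ℂ) : ℂ :=
  (5 / 2 * α ^ 2 - 2 * I * α * u + (11 / 6 * α ^ 2 - 1 / 2) * u ^ 2 - 2 * I * α * u ^ 3
      - 2 / 3 * u ^ 4 - 2 / 3 * I * α * u ^ 5)
    + W * (-1 / 6 * α ^ 2 + 1 / 3 * I * α * u + (1 / 6 - 2 / 3 * α ^ 2) * u ^ 2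
      + 4 / 3 * I * α * u ^ 3 + (1 / 2 - 11 / 6 * α ^ 2) * u ^ 4 + 8 / 3 * I * α * u ^ 5
      + 4 / 3 * u ^ 6 + 4 / 3 * I * α * u ^ 7)
    - 2 / 3 * W ^ 2 * u ^ 7 * (I * α + u + I * α * u ^ 2)

lemma specGamma_sub_eq (τ k : ℝ) {ζ : ℂ} (hζ : ζ ≠ 0) :
    specGamma τ k ζ - I * ((k * τ : ℝ) : ℂ) ^ 3 =
      ζ⁻¹ * specGammaTail ((k * τ : ℝ) : ℂ) ζ⁻¹ (plasmaZRemainder ζ) := by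
  have hZ : plasmaZ ζ = -ζ⁻¹ - ζ⁻¹ ^ 3 + plasmaZRemainder ζ * ζ⁻¹ ^ 5 := by
    rw [plasmaZRemainder]; field_simp; ring
  rw [specGamma, hZ, specGammaTail]
  generalize plasmaZRemainder ζ = W
  generalize ((k * τ : ℝ) : ℂ) = α
  field_simp
  ring_nf
  rw [I_sq]
  ring

lemma exists_norm_specGammaTail_le (α : ℂ) (R : ℝ) :
    ∃ B, ∀ u W : ℂ, ‖u‖ ≤ 1 → ‖W‖ ≤ R → ‖specGammaTail α u W‖ ≤ B := by
  obtain ⟨B, hB⟩ := ((isCompact_closedBall (0 : ℂ) 1).prod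
    (isCompact_closedBall (0 : ℂ) R)).exists_bound_of_continuousOn
      (f := fun p : ℂ × ℂ => specGammaTail α p.1 p.2) (by unfold specGammaTail; fun_prop)
  exact ⟨B, fun u W hu hW => hB (u, W) ⟨by simpa using hu, by simpa using hW⟩⟩

lemma sin_mul_norm_le_re {δ : ℝ} (hδ : 0 ≤ δ) {ζ : ℂ} (h : |arg ζ| ≤ π / 2 - δ) :
    Real.sin δ * ‖ζ‖ ≤ ζ.re := by
  have hcos : Real.sin δ ≤ Real.cos (arg ζ) := by
    rw [← Real.cos_abs (arg ζ), ← Real.cos_pi_div_two_sub]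
    exact Real.cos_le_cos_of_nonneg_of_le_pi (abs_nonneg _) (by linarith [pi_pos]) h
  rw [← norm_mul_cos_arg, mul_comm]
  exact mul_le_mul_of_nonneg_left hcos (norm_nonneg _)

lemma tendsto_norm_coneAtInfty (δ : ℝ) : Tendsto (‖·‖) (coneAtInfty δ) atTop :=
  tendsto_comap.mono_left inf_le_left

lemma eventually_mem_coneAtInfty (δ : ℝ) :
    ∀ᶠ ζ in coneAtInfty δ, |arg ζ| ≤ π / 2 - δ ∧ 0 < ζ.im :=
  mem_inf_of_right (mem_principal_self _)

lemma exists_eventually_norm_plasmaZRemainder_le {δ : ℝ} (hδ₁ : 0 < δ) (hδ₂ : δ ≤ π / 2) :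
    ∃ C, ∀ᶠ ζ in coneAtInfty δ, ‖plasmaZRemainder ζ‖ ≤ C := by
  have hsin : 0 < Real.sin δ := Real.sin_pos_of_pos_of_lt_pi hδ₁ (by linarith [pi_pos])
  obtain ⟨C, hC⟩ := exists_norm_plasmaZRemainder_mul_re_le
  refine ⟨C / Real.sin δ, ?_⟩
  filter_upwards [(tendsto_norm_coneAtInfty δ).eventually_gt_atTop 0,
    eventually_mem_coneAtInfty δ] with ζ hnorm ⟨harg, him⟩
  have hre := sin_mul_norm_le_re hδ₁.le harg
  have hW := hC ζ him ((mul_pos hsin hnorm).trans_le hre)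
  rw [le_div_iff₀ hsin]
  refine le_of_mul_le_mul_right ?_ hnorm
  nlinarith [norm_nonneg (plasmaZRemainder ζ)]

theorem specGamma_cone_asymptotics_general (τ k : ℝ)
    (δ : ℝ) (hδ₁ : 0 < δ) (hδ₂ : δ ≤ π / 2) :
    Tendsto (specGamma τ k) (coneAtInfty δ)
      (nhds (Complex.I * ((k*τ:ℝ):ℂ)^3)) ∧
    (fun ζ : ℂ => specGamma τ k ζ - Complex.I * ((k*τ:ℝ):ℂ)^3)
      =O[coneAtInfty δ] fun ζ : ℂ => ‖ζ‖⁻¹ := by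
  obtain ⟨C, hC⟩ := exists_eventually_norm_plasmaZRemainder_le hδ₁ hδ₂
  obtain ⟨B, hB⟩ := exists_norm_specGammaTail_le ((k * τ : ℝ) : ℂ) C
  have hO : (fun ζ : ℂ => specGamma τ k ζ - I * ((k * τ : ℝ) : ℂ) ^ 3)
      =O[coneAtInfty δ] fun ζ : ℂ => ‖ζ‖⁻¹ := by
    refine IsBigO.of_bound B ?_
    filter_upwards [(tendsto_norm_coneAtInfty δ).eventually_ge_atTop 1, hC] with ζ hnorm hW
    rw [specGamma_sub_eq τ k (norm_pos_iff.mp (by linarith)), norm_mul, norm_inv, norm_inv,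
      norm_norm, mul_comm]
    gcongr
    exact hB _ _ (by simpa using inv_le_one_of_one_le₀ hnorm) hW
  exact ⟨tendsto_sub_nhds_zero_iff.mp
    (hO.trans_tendsto (tendsto_norm_coneAtInfty δ).inv_tendsto_atTop), hO⟩

/-- In any cone `|arg ζ| ≤ π/2 - δ` in the upper half-plane, the spectral function tends to the
constant `i(kτ)³` as `ζ → ∞`, the error being `O(|ζ|⁻¹)`. -/
theorem specGamma_cone_asymptotics (τ k : ℝ) (hτ : 0 < τ) (hk : 0 < k)
    (δ : ℝ) (hδ₁ : 0 < δ) (hδ₂ : δ ≤ π / 2) :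
    Tendsto (specGamma τ k) (coneAtInfty δ)
      (nhds (Complex.I * ((k*τ:ℝ):ℂ)^3)) ∧
    (fun ζ : ℂ => specGamma τ k ζ - Complex.I * ((k*τ:ℝ):ℂ)^3)
      =O[coneAtInfty δ] fun ζ : ℂ => ‖ζ‖⁻¹ :=
  specGamma_cone_asymptotics_general τ k δ hδ₁ hδ₂
end

section
/- The quartic polynomial 132 s^4 - 635 s^3 + 1007 s^2 - 608 s + 130 has no roots in the interval (0,1); consequently P_2(s) = -(s-1)^3 s^2 (132 s^4 - 635 s^3 + 1007 s^2 - 608 s + 130) is nonnegative for s ∈ (0,1). -/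
/-! Subtracting `132 (s² - 12/5 s + 95/99)²` from the quartic, with `12/5` matching the cubic
coefficient and `95/99` killing the linear one, leaves a remainder that is positive on `[-1, 1]`.
On `(0, 1)` the other factor `-(s - 1)³ s² = (1 - s)³ s²` of `P₂` is nonnegative. -/

lemma quartic_eq_sq_add (s : ℝ) :
    132*s^4 - 635*s^3 + 1007*s^2 - 608*s + 130 =
      132 * (s^2 - 12/5*s + 95/99)^2 + 7/5 * (s^2 * (1 - s)) + 604/75 * (1 - s^2) + 2954/7425 := by
  ring

lemma quartic_pos_of_mem_Icc {s : ℝ} (hs : s ∈ Set.Icc (-1 : ℝ) 1) :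
    0 < 132*s^4 - 635*s^3 + 1007*s^2 - 608*s + 130 := by
  have h_cubic : 0 ≤ s^2 * (1 - s) := mul_nonneg (sq_nonneg s) (sub_nonneg.2 hs.2)
  have h_quad : 0 ≤ 1 - s^2 := sub_nonneg.2 ((sq_le_one_iff_abs_le_one s).2 (abs_le.2 hs))
  rw [quartic_eq_sq_add]
  linarith [sq_nonneg (s^2 - 12/5*s + 95/99)]

/-- The quartic factor of `P₂` has no roots in `(0,1)`, hence
`P₂(s) = -(s-1)³ s² (132s⁴ - 635s³ + 1007s² - 608s + 130)` is nonnegative on `(0,1)`. -/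
theorem P2_quartic_no_roots_and_nonneg :
    (∀ s : ℝ, s ∈ Set.Ioo (0:ℝ) 1 → 132*s^4 - 635*s^3 + 1007*s^2 - 608*s + 130 ≠ 0) ∧
    (∀ s : ℝ, s ∈ Set.Ioo (0:ℝ) 1 →
      0 ≤ -(s-1)^3 * s^2 * (132*s^4 - 635*s^3 + 1007*s^2 - 608*s + 130)) := by
  have hq : ∀ s ∈ Set.Ioo (0:ℝ) 1, 0 < 132*s^4 - 635*s^3 + 1007*s^2 - 608*s + 130 :=
    fun s hs => quartic_pos_of_mem_Icc ⟨by linarith [hs.1], hs.2.le⟩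
  refine ⟨fun s hs => (hq s hs).ne', fun s hs => ?_⟩
  have h_cube : 0 ≤ -(s - 1)^3 := by
    rw [← Odd.neg_pow (by norm_num : Odd 3), neg_sub]
    exact pow_nonneg (sub_nonneg.2 hs.2.le) 3
  exact mul_nonneg (mul_nonneg h_cube (sq_nonneg s)) (hq s hs).le
end
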